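/- Let G be an ADMG on V, C a partition of V, and G_C the quotient C-DAG. Suppose clusters X, Z, Y are distinct and in G_C the only edge configuration between them is of the form X *−* Z → Z-to-Y, i.e., Z is a non-collider on the path X, Z, Y with the edge Z → Y present in G_C and no edge from Y into Z or bidirected between Y and Z. Then in G, every path from a vertex of X to a vertex of Y whose interior vertices all lie in Z is blocked when all vertices of Z are conditioned on: that is, no such path is d-connecting given Z. -/
import Mathlib


/-- An acyclic directed mixed graph skeleton: a directed edge relation
together with a symmetric bidirected edge relation. -/
structure MixedGraph (V : Type) where
  dir : V → V → Prop
  bi : V → V → Prop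
  bi_symm : ∀ a b, bi a b → bi b a

namespace MixedGraph

variable {V : Type} {I : Type}

/-- Adjacency: a directed edge in either orientation or a bidirected edge. -/
def Adj (G : MixedGraph V) (a b : V) : Prop :=
  G.dir a b ∨ G.dir b a ∨ G.bi a b

/-- Acyclicity of the directed part. -/
def Acyclic (G : MixedGraph V) : Prop :=
  ∀ a, ¬ Relation.TransGen G.dir a a

/-- The quotient (cluster) graph of `G` by the partition given by the fibers of `π`. -/
def quot (G : MixedGraph V) (π : V → I) : MixedGraph I where
  dir i j := i ≠ j ∧ ∃ a b, π a = i ∧ π b = j ∧ G.dir a b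
  bi i j := i ≠ j ∧ ∃ a b, π a = i ∧ π b = j ∧ G.bi a b
  bi_symm := by
    rintro i j ⟨hne, a, b, ha, hb, h⟩
    exact ⟨hne.symm, b, a, hb, ha, G.bi_symm a b h⟩

/-- The mutilated graph: delete all edges with an arrowhead into `X`
and all directed edges out of `Z`. -/
def mutil (G : MixedGraph V) (X Z : Set V) : MixedGraph V where
  dir a b := G.dir a b ∧ b ∉ X ∧ a ∉ Z
  bi a b := G.bi a b ∧ a ∉ X ∧ b ∉ X
  bi_symm := by
    rintro a b ⟨h, ha, hb⟩
    exact ⟨G.bi_symm a b h, hb, ha⟩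

/-- Type of an edge as traversed along a walk. -/
inductive EType : Type
  | fwd   -- a → b
  | bwd   -- a ← b
  | bidir -- a ↔ b
deriving DecidableEq

/-- The step relation of a walk. -/
def step (G : MixedGraph V) (a : V) (e : EType) (b : V) : Prop :=
  match e with
  | .fwd => G.dir a b
  | .bwd => G.dir b a
  | .bidir => G.bi a b

/-- A walk starting at a vertex, given by a list of (edge type, next vertex). -/
def IsWalk (G : MixedGraph V) : V → List (EType × V) → Prop
  | _, [] => True
  | a, (e, b) :: rest => G.step a e b ∧ IsWalk G b rest

/-- The final vertex of a walk. -/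
def walkEnd : V → List (EType × V) → V
  | a, [] => a
  | _, (_, b) :: rest => walkEnd b rest

/-- `b` is a descendant of `a` (along directed edges, reflexively). -/
def Desc (G : MixedGraph V) : V → V → Prop :=
  Relation.ReflTransGen G.dir

/-- Whether an interior vertex between two consecutive steps is a collider:
an arrowhead on both sides. -/
def colliderAt (e₁ e₂ : EType) : Prop :=
  (e₁ = EType.fwd ∨ e₁ = EType.bidir) ∧ (e₂ = EType.bwd ∨ e₂ = EType.bidir)

/-- A walk is active (d-connecting) given a conditioning set `S`:
every interior non-collider lies outside `S` and every interior collider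
is in `S` or has a descendant in `S`. -/
def Active (G : MixedGraph V) (S : Set V) : List (EType × V) → Prop
  | [] => True
  | [_] => True
  | (e₁, b) :: (e₂, c) :: rest =>
      ((colliderAt e₁ e₂ ∧ ∃ d ∈ S, G.Desc b d) ∨ (¬ colliderAt e₁ e₂ ∧ b ∉ S))
      ∧ Active G S ((e₂, c) :: rest)

/-- The walk contains an (interior) collider belonging to `T`. -/
def HasColliderIn (G : MixedGraph V) (T : Set V) : List (EType × V) → Prop
  | (e₁, b) :: (e₂, c) :: rest =>
      (colliderAt e₁ e₂ ∧ b ∈ T) ∨ HasColliderIn G T ((e₂, c) :: rest)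
  | _ => False

/-- `X` and `Y` are d-connected given `S`: some active walk joins them. -/
def DConn (G : MixedGraph V) (S X Y : Set V) : Prop :=
  ∃ x ∈ X, ∃ w : List (EType × V),
    w ≠ [] ∧ G.IsWalk x w ∧ walkEnd x w ∈ Y ∧ G.Active S w

/-- d-separation: no active walk between `X` and `Y` given `S`. -/
def DSep (G : MixedGraph V) (S X Y : Set V) : Prop :=
  ¬ G.DConn S X Y

end MixedGraph

open MixedGraph in
theorem stmt5_aux {V I : Type} (G : MixedGraph V) (π : V → I) (z y : I)
    (hnoback : ∀ a b : V, π a = y → π b = z → ¬ G.dir a b ∧ ¬ G.bi a b) :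
    ∀ (w : List (EType × V)) (a : V), G.IsWalk a w →
      π (MixedGraph.walkEnd a w) = y →
      (w.map Prod.snd).dropLast ≠ [] →
      (∀ v ∈ (w.map Prod.snd).dropLast, π v = z) →
      ¬ G.Active {v : V | π v = z} w
  | [], _ => by simp
  | [(e, b)], _ => by simp
  | [(e₁, b), (e₂, c)], a => by
    intro hw hend hne hint hact
    obtain ⟨hs1, hs2, -⟩ := hw
    have hbz : π b = z := hint b (by simp)
    have hcy : π c = y := hend
    rcases hact.1 with ⟨⟨-, h2⟩, -⟩ | ⟨-, hb⟩
    · rcases h2 with h2 | h2 <;> subst h2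
      · exact (hnoback c b hcy hbz).1 hs2
      · exact (hnoback c b hcy hbz).2 (G.bi_symm b c hs2)
    · exact hb hbz
  | (e₁, b) :: (e₂, c) :: (e₃, d) :: rest, a => by
    intro hw hend hne hint hact
    exact stmt5_aux G π z y hnoback ((e₂, c) :: (e₃, d) :: rest) b hw.2 hend
      (by simp)
      (fun v hv => hint v (by
        simpa [List.dropLast_cons₂] using Or.inr hv))
      hact.2

open MixedGraph in
/-- a conditioned non-collider cluster `Z` on the configuration
`X *−* Z → Y` blocks, in `G`, every path from `X` to `Y` whose interior
vertices all lie in `Z`, when conditioning on all of `Z`. -/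
theorem stmt5 {V I : Type} (G : MixedGraph V) (π : V → I)
    (hsurj : Function.Surjective π)
    (x z y : I) (hxz : x ≠ z) (hzy : z ≠ y) (hxy : x ≠ y)
    -- the edge Z → Y is present in the C-DAG
    (hedge : (G.quot π).dir z y)
    -- no edge from Y into Z and no bidirected edge between Y and Z in G
    (hnoback : ∀ a b : V, π a = y → π b = z → ¬ G.dir a b ∧ ¬ G.bi a b)
    (a : V) (w : List (EType × V))
    (ha : π a = x) (hw : G.IsWalk a w) (hend : π (MixedGraph.walkEnd a w) = y)
    -- the interior of the walk is nonempty and lies entirely in cluster z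
    (hint_ne : (w.map Prod.snd).dropLast ≠ [])
    (hint : ∀ v ∈ (w.map Prod.snd).dropLast, π v = z) :
    ¬ G.Active {v : V | π v = z} w := by
  exact stmt5_aux G π z y hnoback w a hw hend hint_ne hint
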